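/- arXiv:1308.0979 — 6 statements merged into one kernel-verified Lean document; each statement's English description precedes it below -/
import Mathlib

section
/- In the total effort interdependent security game with N users, risk function f_i(x) = f(Σ_j x_j) for a differentiable, strictly convex, positive, strictly decreasing function f, and distinct unit costs c_1 < c_2 < ... < c_N, at any Nash equilibrium (where each user i chooses x_i ≥ 0 to minimize f(Σ_j x_j) + c_i x_i given others' choices), every user j with j > 1 exerts zero effort, i.e., x̄_j = 0 for all j ≥ 2. -/
open Filter Set Topology

/-- In the total effort IDS game with distinct costs `c 0 < c 1 < ...`, at any
Nash equilibrium every user other than the lowest-cost user exerts zero effort. -/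
theorem stmt0 (N : ℕ) (hN : 2 ≤ N) (f : ℝ → ℝ)
    (hdiff : Differentiable ℝ f)
    (hconv : StrictConvexOn ℝ Set.univ f)
    (hpos : ∀ s : ℝ, 0 < f s)
    (hdec : StrictAnti f)
    (c : Fin N → ℝ) (hc0 : 0 < c ⟨0, by omega⟩) (hmono : StrictMono c)
    (xbar : Fin N → ℝ) (hxbar : ∀ i, 0 ≤ xbar i)
    (hNE : ∀ i : Fin N, ∀ y : ℝ, 0 ≤ y →
      f (∑ j, xbar j) + c i * xbar i ≤
        f (y + ∑ j ∈ Finset.univ.erase i, xbar j) + c i * y) :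
    ∀ j : Fin N, j ≠ ⟨0, by omega⟩ → xbar j = 0 := by
  intro j hj
  by_contra hne
  have hxj : 0 < xbar j := lt_of_le_of_ne (hxbar j) (Ne.symm hne)
  set S := ∑ k, xbar k with hS
  have hkey : ∀ i : Fin N, ∀ y : ℝ, 0 ≤ xbar i + (y - S) →
      f S ≤ f y + c i * (y - S) := by
    intro i y hy
    have h := hNE i (xbar i + (y - S)) hy
    have herase : ∑ k ∈ Finset.univ.erase i, xbar k = S - xbar i :=
      Finset.sum_erase_eq_sub (Finset.mem_univ i)
    rw [herase] at h
    have hyy : xbar i + (y - S) + (S - xbar i) = y := by ring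
    rw [hyy] at h
    nlinarith [h]
  have hd : HasDerivAt f (deriv f S) S := (hdiff S).hasDerivAt
  have htend := hasDerivAt_iff_tendsto_slope.mp hd
  have h1 : -c ⟨0, by omega⟩ ≤ deriv f S := by
    have htend' : Tendsto (slope f S) (𝓝[>] S) (𝓝 (deriv f S)) :=
      htend.mono_left (nhdsWithin_mono _ (fun y hy => ne_of_gt hy))
    refine ge_of_tendsto htend' ?_
    filter_upwards [self_mem_nhdsWithin] with y hy
    have hyS : S < y := hy
    have h0 := hkey ⟨0, by omega⟩ y (by have := hxbar ⟨0, by omega⟩; linarith)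
    rw [slope_def_field, le_div_iff₀ (by linarith : (0:ℝ) < y - S)]
    nlinarith [h0]
  have h2 : deriv f S ≤ -c j := by
    have htend' : Tendsto (slope f S) (𝓝[<] S) (𝓝 (deriv f S)) :=
      htend.mono_left (nhdsWithin_mono _ (fun y hy => ne_of_lt hy))
    refine le_of_tendsto htend' ?_
    have hmem : Ioo (S - xbar j) S ∈ 𝓝[<] S :=
      Ioo_mem_nhdsLT_of_mem ⟨by linarith, le_refl _⟩
    filter_upwards [hmem] with y hy
    obtain ⟨hy1, hy2⟩ := hy
    have h0 := hkey j y (by linarith)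
    rw [slope_def_field, div_le_iff_of_neg (by linarith : y - S < 0)]
    nlinarith [h0]
  have hlt : (⟨0, by omega⟩ : Fin N) < j := by
    have hne0 : j.val ≠ 0 := fun h => hj (Fin.ext h)
    rw [Fin.lt_def]
    show 0 < j.val
    omega
  have := hmono hlt
  linarith
end

section
/- For each user i, if f_i : ℝ^N → ℝ is positive, differentiable, convex, and decreasing in each coordinate, then the best response of user i (the minimizer of f_i(x_i, x_{-i}) + c_i x_i over x_i ≥ 0) lies in the interval [0, (f_i(0) + ε)/c_i] for any ε > 0, regardless of x_{-i} ⪰ 0. In particular, setting x̂_i = (f_i(0,...,0) + ε)/c_i, the partial derivative ∂f_i/∂x_i evaluated at (x̂_i, x_{-i}) plus c_i is strictly positive. -/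
/-- Any best response of user `i` lies in `[0, (f_i(0)+ε)/c_i]`, and the partial
derivative of `f_i` in coordinate `i` at `x̂_i = (f_i(0)+ε)/c_i` plus `c_i` is
strictly positive. -/
theorem stmt3 (N : ℕ) (i : Fin N)
    (f : (Fin N → ℝ) → ℝ)
    (hdiff : Differentiable ℝ f)
    (hpos : ∀ x : Fin N → ℝ, (∀ j, 0 ≤ x j) → 0 < f x)
    (hconv : ConvexOn ℝ Set.univ f)
    (hdec : ∀ (x : Fin N → ℝ) (j : Fin N), Antitone fun t => f (Function.update x j t))
    (hzero : ∀ x : Fin N → ℝ, (∀ j, 0 ≤ x j) → f (Function.update x i 0) ≤ f 0)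
    (c : ℝ) (hc : 0 < c) (ε : ℝ) (hε : 0 < ε)
    (x : Fin N → ℝ) (hx : ∀ j, 0 ≤ x j)
    (xhat : ℝ) (hxhat : xhat = (f 0 + ε) / c)
    (d : ℝ) (hd : HasDerivAt (fun t => f (Function.update x i t)) d xhat) :
    0 < d + c ∧
      ∀ y : ℝ, 0 ≤ y →
        (∀ z : ℝ, 0 ≤ z →
          f (Function.update x i y) + c * y ≤ f (Function.update x i z) + c * z) →
        y ≤ xhat := by
  have hf0 : 0 < f 0 := hpos 0 (fun j => le_refl 0)
  have hxhatpos : 0 < xhat := by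
    rw [hxhat]; positivity
  set g : ℝ → ℝ := fun t => f (Function.update x i t) with hg
  -- g is convex
  have gconv : ConvexOn ℝ Set.univ g := by
    constructor
    · exact convex_univ
    · intro s _ t _ a b ha hb hab
      have key : Function.update x i (a * s + b * t)
          = a • Function.update x i s + b • Function.update x i t := by
        funext j
        by_cases hj : j = i
        · subst hj; simp [Function.update_self]
        · simp [Function.update_of_ne hj, Pi.add_apply]
          linear_combination (x j) * hab.symm
      have := hconv.2 (Set.mem_univ (Function.update x i s))
        (Set.mem_univ (Function.update x i t)) ha hb hab
      simpa [hg, key, smul_eq_mul] using this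
  have hslope := gconv.slope_le_of_hasDerivAt (Set.mem_univ 0) (Set.mem_univ xhat)
      hxhatpos hd
  have hslope' : (g xhat - g 0) / xhat ≤ d := by
    simpa [slope_def_field] using hslope
  have hg0 : g 0 ≤ f 0 := hzero x hx
  have hgxhat : 0 < g xhat := by
    apply hpos
    intro j
    by_cases hj : j = i
    · subst hj; simp [Function.update_self]; exact hxhatpos.le
    · simp [Function.update_of_ne hj]; exact hx j
  constructor
  · by_contra h
    push_neg at h
    have hdle : d ≤ -c := by linarith
    have h1 : g xhat - g 0 ≤ d * xhat := by
      have := (div_le_iff₀ hxhatpos).mp hslope'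
      linarith
    have h2 : d * xhat ≤ -c * xhat :=
      mul_le_mul_of_nonneg_right hdle hxhatpos.le
    have h3 : c * xhat = f 0 + ε := by
      rw [hxhat]; field_simp
    nlinarith
  · intro y hy hmin
    have h1 := hmin 0 le_rfl
    have hgy : 0 < g y := by
      apply hpos
      intro j
      by_cases hj : j = i
      · subst hj; simp [Function.update_self]; exact hy
      · simp [Function.update_of_ne hj]; exact hx j
    have : c * y ≤ f 0 := by
      have : g y + c * y ≤ g 0 + c * 0 := h1
      have := hg0
      simp at *
      linarith
    rw [hxhat]
    rw [le_div_iff₀ hc]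
    nlinarith
end

section
/- The taxes defined by the PESIM outcome function are budget balanced both on and off equilibrium: for any message profile m = ((π_1, x_1), ..., (π_N, x_N)), the sum over all users i of t̂_i(m) = (π_{i+1} - π_{i+2})^T x̂(m) + (x_i - x_{i+1})^T diag(π_i)(x_i - x_{i+1}) - (x_{i+1} - x_{i+2})^T diag(π_{i+1})(x_{i+1} - x_{i+2}) equals zero, where indices are taken modulo N and x̂(m) = (1/N) Σ_i x_i. -/
/-!
Each tax is a sum of two cyclic differences, `p (i + 1) - p (i + 2)` with `p j = π_jᵀ x̂` and
`q i - q (i + 1)` with `q i` the weighted squared gap between `x_i` and `x_{i+1}`. Summed over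
the cyclic group `Fin N`, every such difference cancels, since translation permutes the indices.
-/

open Finset

theorem Fintype.sum_comp_add_sub_comp_add {G M : Type*} [AddGroup G] [Fintype G]
    [AddCommGroup M] (f : G → M) (a b : G) :
    ∑ i, (f (i + a) - f (i + b)) = 0 := by
  have h_shift (c : G) : ∑ i, f (i + c) = ∑ i, f i :=
    Fintype.sum_equiv (Equiv.addRight c) _ f fun _ ↦ rfl
  rw [sum_sub_distrib, h_shift, h_shift, sub_self]

theorem stmt5_general (N : ℕ) [NeZero N]
    (π x : Fin N → Fin N → ℝ) :
    ∑ i : Fin N,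
      ((∑ k, (π (i + 1) k - π (i + 2) k) * ((N : ℝ)⁻¹ * ∑ j, x j k))
        + ∑ k, π i k * (x i k - x (i + 1) k) ^ 2
        - ∑ k, π (i + 1) k * (x (i + 1) k - x (i + 2) k) ^ 2) = 0 := by
  set p : Fin N → ℝ := fun n ↦ ∑ k, π n k * ((N : ℝ)⁻¹ * ∑ j, x j k)
  set q : Fin N → ℝ := fun i ↦ ∑ k, π i k * (x i k - x (i + 1) k) ^ 2
  have h_tax (i : Fin N) :
      (∑ k, (π (i + 1) k - π (i + 2) k) * ((N : ℝ)⁻¹ * ∑ j, x j k))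
        + ∑ k, π i k * (x i k - x (i + 1) k) ^ 2
        - ∑ k, π (i + 1) k * (x (i + 1) k - x (i + 2) k) ^ 2
      = (p (i + 1) - p (i + 2)) + (q (i + 0) - q (i + 1)) := by
    have h_two : i + 2 = i + 1 + 1 := by open Fin.CommRing in ring
    rw [add_zero, h_two]
    simp only [p, q, sub_mul, sum_sub_distrib]
    ring
  rw [sum_congr rfl fun i _ ↦ h_tax i, sum_add_distrib, Fintype.sum_comp_add_sub_comp_add,
    Fintype.sum_comp_add_sub_comp_add, add_zero]

/-- The PESIM taxes are budget balanced on and off equilibrium: for any message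
profile the taxes sum to zero (indices cyclic modulo `N`). -/
theorem stmt5 (N : ℕ) [NeZero N] (hN : 3 ≤ N)
    (π x : Fin N → Fin N → ℝ) (hπ : ∀ i k, 0 ≤ π i k) :
    ∑ i : Fin N,
      ((∑ k, (π (i + 1) k - π (i + 2) k) * ((N : ℝ)⁻¹ * ∑ j, x j k))
        + ∑ k, π i k * (x i k - x (i + 1) k) ^ 2
        - ∑ k, π (i + 1) k * (x (i + 1) k - x (i + 2) k) ^ 2) = 0 :=
  stmt5_general N π x
end

section
/- Given the socially optimal investment profile x* minimizing Σ_i g_i(x) over x ⪰ 0, where each g_i is differentiable and convex, the personalized Lindhal prices l*_i := -∇g_i(x*) + λ_i (where λ_i ⪰ 0 are the KKT multipliers satisfying Σ_i(∇g_i(x*) - λ_i) = 0 and λ_i^T x* = 0) satisfy: x* minimizes g_i(x) + (l*_i)^T x over x ⪰ 0, for every user i. -/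
/-!
The Lindahl price `l*_i` is chosen so that `∇g_i(x*) + l*_i = λ_i`, which together with
`λ_i ⪰ 0` and `λ_iᵀ x* = 0` are the KKT conditions of user `i`'s problem
`min_{x ⪰ 0} g_i(x) + l*_iᵀ x`. For a convex objective these are sufficient: the gradient
inequality gives `g_i(x) + l*_iᵀ x ≥ g_i(x*) + l*_iᵀ x* + λ_iᵀ x - λ_iᵀ x*`, and
`λ_iᵀ x ≥ 0 = λ_iᵀ x*` on the orthant.
-/

open Set

theorem ContinuousLinearMap.apply_eq_sum_mul_apply_single {ι : Type*} [Fintype ι]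
    [DecidableEq ι] (D : (ι → ℝ) →L[ℝ] ℝ) (v : ι → ℝ) :
    D v = ∑ k, v k * D (Pi.single k 1) := by
  conv_lhs => rw [← Finset.univ_sum_single v]
  refine (map_sum D _ _).trans (Finset.sum_congr rfl fun k _ => ?_)
  rw [← smul_eq_mul, ← map_smul, ← Pi.single_smul', smul_eq_mul, mul_one]

theorem ConvexOn.add_fderiv_sub_le {E : Type*} [NormedAddCommGroup E] [NormedSpace ℝ E]
    {s : Set E} {f : E → ℝ} {f' : E →L[ℝ] ℝ} {a b : E} (hf : ConvexOn ℝ s f)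
    (ha : a ∈ s) (hb : b ∈ s) (hf' : HasFDerivAt f f' a) :
    f a + f' (b - a) ≤ f b := by
  have hline : ConvexOn ℝ (AffineMap.lineMap a b ⁻¹' s) (f ∘ AffineMap.lineMap a b) :=
    hf.comp_affineMap _
  have hderiv : HasDerivAt (f ∘ AffineMap.lineMap a b) (f' (b - a)) (0 : ℝ) := by
    refine HasFDerivAt.comp_hasDerivAt (0 : ℝ) ?_ AffineMap.hasDerivAt_lineMap
    simpa using hf'
  have hslope := hline.le_slope_of_hasDerivAt (x := 0) (y := 1) (by simpa using ha)
    (by simpa using hb) zero_lt_one hderiv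
  simp only [slope_def_field, Function.comp_apply, AffineMap.lineMap_apply_zero,
    AffineMap.lineMap_apply_one, sub_zero, div_one] at hslope
  linarith

theorem ConvexOn.isMinOn_add_sum_mul_of_kkt_nonneg {ι : Type*} [Fintype ι] [DecidableEq ι]
    {f : (ι → ℝ) → ℝ} {f' : (ι → ℝ) →L[ℝ] ℝ} {a μ l : ι → ℝ}
    (hf : ConvexOn ℝ (Ici 0) f) (ha : 0 ≤ a) (hf' : HasFDerivAt f f' a)
    (hμ : 0 ≤ μ) (hcs : ∑ k, μ k * a k = 0) (hl : ∀ k, l k = -f' (Pi.single k 1) + μ k) :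
    IsMinOn (fun x => f x + ∑ k, l k * x k) (Ici 0) a := by
  intro x (hx : 0 ≤ x)
  have hgrad : f a + f' (x - a) ≤ f x := hf.add_fderiv_sub_le ha hx hf'
  have hμx : 0 ≤ ∑ k, μ k * x k := Finset.sum_nonneg fun k _ => mul_nonneg (hμ k) (hx k)
  have hprices : ∑ k, l k * x k - ∑ k, l k * a k
      = -f' (x - a) + ∑ k, μ k * x k - ∑ k, μ k * a k := by
    simp only [f'.apply_eq_sum_mul_apply_single (x - a), hl, Pi.sub_apply,
      ← Finset.sum_sub_distrib, ← Finset.sum_neg_distrib, ← Finset.sum_add_distrib]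
    exact Finset.sum_congr rfl fun k _ => by ring
  show f a + ∑ k, l k * a k ≤ f x + ∑ k, l k * x k
  linarith

theorem stmt10_general (N : ℕ)
    (g : Fin N → (Fin N → ℝ) → ℝ)
    (hdiff : ∀ i, Differentiable ℝ (g i))
    (hconv : ∀ i, ConvexOn ℝ Set.univ (g i))
    (xstar : Fin N → ℝ) (hxstar : ∀ k, 0 ≤ xstar k)
    (lam : Fin N → Fin N → ℝ) (hlam : ∀ i k, 0 ≤ lam i k)
    (hcs : ∀ i : Fin N, ∑ k, lam i k * xstar k = 0)
    (l : Fin N → Fin N → ℝ)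
    (hldef : ∀ i k, l i k = -(fderiv ℝ (g i) xstar (Pi.single k 1)) + lam i k) :
    ∀ i : Fin N, ∀ x : Fin N → ℝ, (∀ k, 0 ≤ x k) →
      g i xstar + ∑ k, l i k * xstar k ≤ g i x + ∑ k, l i k * x k := fun i x hx =>
  ((hconv i).subset (subset_univ _) (convex_Ici 0)).isMinOn_add_sum_mul_of_kkt_nonneg
    hxstar (hdiff i xstar).hasFDerivAt (hlam i) (hcs i) (hldef i) (show 0 ≤ x from hx)

/-- Given the socially optimal profile `x*` with KKT multipliers `λ_i`, the
Lindhal prices `l*_i = -∇g_i(x*) + λ_i` make `x*` individually optimal: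
`x*` minimizes `g_i(x) + (l*_i)ᵀx` over the nonnegative orthant, for every `i`. -/
theorem stmt10 (N : ℕ)
    (g : Fin N → (Fin N → ℝ) → ℝ)
    (hdiff : ∀ i, Differentiable ℝ (g i))
    (hconv : ∀ i, ConvexOn ℝ Set.univ (g i))
    (xstar : Fin N → ℝ) (hxstar : ∀ k, 0 ≤ xstar k)
    (hopt : ∀ x : Fin N → ℝ, (∀ k, 0 ≤ x k) → ∑ i, g i xstar ≤ ∑ i, g i x)
    (lam : Fin N → Fin N → ℝ) (hlam : ∀ i k, 0 ≤ lam i k)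
    (hstat : ∀ k : Fin N,
      ∑ i, (fderiv ℝ (g i) xstar (Pi.single k 1) - lam i k) = 0)
    (hcs : ∀ i : Fin N, ∑ k, lam i k * xstar k = 0)
    (l : Fin N → Fin N → ℝ)
    (hldef : ∀ i k, l i k = -(fderiv ℝ (g i) xstar (Pi.single k 1)) + lam i k) :
    ∀ i : Fin N, ∀ x : Fin N → ℝ, (∀ k, 0 ≤ x k) →
      g i xstar + ∑ k, l i k * xstar k ≤ g i x + ∑ k, l i k * x k :=
  stmt10_general N g hdiff hconv xstar hxstar lam hlam hcs l hldef
end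

section
/- In the exponential total effort model, under the PESIM mechanism at the socially optimal equilibrium, user 1's Lindhal tax is t*_1 = -(1 - 1/N) c_1 x*_1, i.e., user 1 receives a reward: given x*_1 = ln(N/c_1), the Lindhal price component l_{11} satisfying l_{11} - exp(-x*_1) + c_1 = 0 equals -(1 - 1/N)c_1, and hence t*_1 = l_{11} x*_1 = -(1 - 1/N) c_1 ln(N/c_1) < 0 when c_1 < N. -/
/-- In the exponential total effort model, user 1's Lindhal price determined by
the stationarity condition `l₁₁ - exp(-x*₁) + c₁ = 0` at `x*₁ = ln(N/c₁)` equals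
`-(1 - 1/N)c₁`, and the resulting tax `t*₁ = l₁₁ x*₁` is strictly negative
(a reward) when `0 < c₁ < N`. -/
theorem stmt15 (N : ℕ) (hN : 2 ≤ N)
    (c1 : ℝ) (hc1 : 0 < c1) (hc1N : c1 < N)
    (xstar1 : ℝ) (hxstar1 : xstar1 = Real.log (N / c1))
    (l11 : ℝ) (hstat : l11 - Real.exp (-xstar1) + c1 = 0) :
    l11 = -(1 - 1 / (N : ℝ)) * c1 ∧
      l11 * xstar1 = -(1 - 1 / (N : ℝ)) * c1 * Real.log (N / c1) ∧
      l11 * xstar1 < 0 := by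
  have hNpos : (0:ℝ) < N := by positivity
  have hdiv : (0:ℝ) < (N:ℝ) / c1 := div_pos hNpos hc1
  have hexp : Real.exp (-xstar1) = c1 / N := by
    rw [hxstar1, ← Real.log_inv, Real.exp_log (by positivity), inv_div]
  have hl : l11 = -(1 - 1 / (N : ℝ)) * c1 := by
    have hN0 : (N:ℝ) ≠ 0 := ne_of_gt hNpos
    field_simp at hstat ⊢
    rw [hexp] at hstat
    field_simp at hstat
    linarith
  refine ⟨hl, by rw [hl, hxstar1], ?_⟩
  have hlog : 0 < Real.log ((N:ℝ) / c1) := by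
    apply Real.log_pos
    rw [lt_div_iff₀ hc1]; linarith
  have hNe : (1:ℝ) < N := by exact_mod_cast lt_of_lt_of_le one_lt_two (by exact_mod_cast hN)
  have : 0 < (1 - 1 / (N:ℝ)) := by
    have : 1 / (N:ℝ) < 1 := by rw [div_lt_one hNpos]; exact hNe
    linarith
  rw [hl, hxstar1]
  have := mul_pos (mul_pos this hc1) hlog
  nlinarith
end

section
/- Failure of individual rationality in the PESIM mechanism (exponential total effort model): if c_1 ≥ e (and the loner best-response case applies, with exp(-x̂_1) = c_1 meaning x̂_1 = -ln c_1 ≤ 0, effectively x̂_1 at the boundary), the difference between user 1's utility inside the mechanism and outside equals (c_1/N)((N-1)(1 - ln c_1) - ln N), which is negative whenever ln c_1 ≥ 1 and N ≥ 2; hence u_1^IN < u_1^OUT. -/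
/-- Failure of individual rationality of PESIM in the exponential total effort
model: when `c₁ ≥ e`, user 1's utility inside the mechanism minus its utility
as a loner equals `(c₁/N)((N-1)(1 - ln c₁) - ln N) < 0`, so `u₁ᴵᴺ < u₁ᴼᵁᵀ`. -/
theorem stmt16 (N : ℕ) (hN : 2 ≤ N)
    (c1 : ℝ) (hc1 : Real.exp 1 ≤ c1)
    (uIN uOUT : ℝ)
    (huIN : uIN = -c1 / N - (c1 / N) * Real.log (N / c1))
    (huOUT : uOUT = -c1 + c1 * Real.log c1) :
    uIN - uOUT = (c1 / N) * (((N : ℝ) - 1) * (1 - Real.log c1) - Real.log N) ∧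
      uIN < uOUT := by
  have hc1pos : (0:ℝ) < c1 := lt_of_lt_of_le (Real.exp_pos 1) hc1
  have hNpos : (0:ℝ) < (N:ℝ) := by positivity
  have hNne : (N:ℝ) ≠ 0 := ne_of_gt hNpos
  have hlog : Real.log ((N:ℝ) / c1) = Real.log N - Real.log c1 :=
    Real.log_div hNne (ne_of_gt hc1pos)
  have heq : uIN - uOUT = (c1 / N) * (((N : ℝ) - 1) * (1 - Real.log c1) - Real.log N) := by
    rw [huIN, huOUT, hlog]; field_simp; ring
  refine ⟨heq, ?_⟩
  have hln1 : 1 ≤ Real.log c1 := by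
    rw [← Real.log_exp 1]
    exact Real.log_le_log (Real.exp_pos 1) hc1
  have hlogN : 0 < Real.log N := by
    apply Real.log_pos
    exact_mod_cast hN
  have hN1 : (1:ℝ) ≤ (N:ℝ) := by exact_mod_cast Nat.one_le_of_lt hN
  have h1 : ((N : ℝ) - 1) * (1 - Real.log c1) ≤ 0 :=
    mul_nonpos_of_nonneg_of_nonpos (by linarith) (by linarith)
  have hneg : ((N : ℝ) - 1) * (1 - Real.log c1) - Real.log N < 0 := by linarith
  have : uIN - uOUT < 0 := by
    rw [heq]
    exact mul_neg_of_pos_of_neg (by positivity) hneg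
  linarith
end
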